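/- Let C be a nontrivial completely regular code in H(n,q) with covering radius ρ ≥ 1 and intersection numbers γ_i, β_i, and let C' be a nontrivial completely regular code in H(n',q') with covering radius ρ' ≥ ρ and intersection numbers γ'_i, β'_i. Then C × C' is completely regular in H(n,q) × H(n',q') if and only if there exist integers n_1, n_2 such that γ_i = n_1·i for 0 ≤ i ≤ ρ, γ'_i = n_1·i for 0 ≤ i ≤ ρ', β_{ρ-i} = n_2·i for 0 ≤ i ≤ ρ, and β'_{ρ'-i} = n_2·i for 0 ≤ i ≤ ρ'. In this case C × C' has covering radius ρ + ρ' with intersection numbers γ̄_i = n_1·i and β̄_i = n_2(ρ+ρ'−i). -/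

import Mathlib

open SimpleGraph

/-- The Hamming graph on `Fin n → Q`: words adjacent iff they differ in one coordinate. -/
def hammingGraph (n : ℕ) (Q : Type*) [DecidableEq Q] : SimpleGraph (Fin n → Q) where
  Adj x y := hammingDist x y = 1
  symm := ⟨fun x y h => by show hammingDist y x = 1; rw [hammingDist_comm]; exact h⟩
  loopless := ⟨fun x h => by have h : hammingDist x x = 1 := h; rw [hammingDist_self] at h; exact absurd h.symm one_ne_zero⟩

/-- Distance from a vertex to a code, via graph distance. -/
noncomputable def distToCode {V : Type*} (G : SimpleGraph V) (C : Set V) (x : V) : ℕ :=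
  sInf {d | ∃ c ∈ C, G.dist x c = d}

/-- The `i`-th cell of the distance partition of a code. -/
noncomputable def codeCell {V : Type*} (G : SimpleGraph V) (C : Set V) (i : ℕ) : Set V :=
  {x | distToCode G C x = i}

/-- The number of neighbors of `x` lying in `S`. -/
noncomputable def nbrCount {V : Type*} (G : SimpleGraph V) (x : V) (S : Set V) : ℕ :=
  (G.neighborSet x ∩ S).ncard

/-- Covering radius of a code. -/
noncomputable def covRad {V : Type*} (G : SimpleGraph V) (C : Set V) : ℕ :=
  sSup {d | ∃ x, distToCode G C x = d}

/-- A code is completely regular if its distance partition is equitable. -/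
def IsCompRegCode {V : Type*} (G : SimpleGraph V) (C : Set V) : Prop :=
  ∀ i j : ℕ, ∀ x ∈ codeCell G C i, ∀ y ∈ codeCell G C i,
    nbrCount G x (codeCell G C j) = nbrCount G y (codeCell G C j)

/-- Intersection numbers `γ, α, β` of a code with covering radius `ρ`. -/
def HasIntNums {V : Type*} (G : SimpleGraph V) (C : Set V) (ρ : ℕ) (γ α β : ℕ → ℕ) : Prop :=
  γ 0 = 0 ∧ β ρ = 0 ∧
  ∀ i ≤ ρ, ∀ x ∈ codeCell G C i,
    (1 ≤ i → nbrCount G x (codeCell G C (i-1)) = γ i) ∧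
    nbrCount G x (codeCell G C i) = α i ∧
    (i < ρ → nbrCount G x (codeCell G C (i+1)) = β i)

/-- Equitable partition of the vertex set of a graph. -/
def IsEquitable {V : Type*} (G : SimpleGraph V) (Pa : Set (Set V)) : Prop :=
  ∀ P ∈ Pa, ∀ P' ∈ Pa, ∀ x ∈ P, ∀ y ∈ P, nbrCount G x P' = nbrCount G y P'

/-- Quotient graph of a graph by a partition of its vertex set. -/
def quotientGraph {V : Type*} (G : SimpleGraph V) (Pa : Set (Set V)) : SimpleGraph Pa where
  Adj P P' := P ≠ P' ∧ ∃ x ∈ (P : Set V), ∃ y ∈ (P' : Set V), G.Adj x y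
  symm := ⟨by
    rintro P P' ⟨hne, x, hx, y, hy, hxy⟩
    exact ⟨hne.symm, y, hy, x, hx, hxy.symm⟩⟩
  loopless := ⟨by rintro P ⟨hne, -⟩; exact hne rfl⟩

/-- Completely regular partition with common intersection numbers. -/
def IsCompRegPartition {V : Type*} (G : SimpleGraph V) (Pa : Set (Set V))
    (ρ : ℕ) (γ α β : ℕ → ℕ) : Prop :=
  Setoid.IsPartition Pa ∧ IsEquitable G Pa ∧
    ∀ P ∈ Pa, IsCompRegCode G P ∧ covRad G P = ρ ∧ HasIntNums G P ρ γ α β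

/-- Distance-regular graph of diameter `D` with intersection arrays `b`, `c`. -/
def IsDistRegular {V : Type*} (G : SimpleGraph V) (D : ℕ) (b c : ℕ → ℕ) : Prop :=
  G.Connected ∧ (∀ x y : V, G.dist x y ≤ D) ∧ (∃ x y : V, G.dist x y = D) ∧
  ∀ i ≤ D, ∀ x y : V, G.dist x y = i →
    (1 ≤ i → nbrCount G y {z | G.dist x z = i - 1} = c i) ∧
    (i < D → nbrCount G y {z | G.dist x z = i + 1} = b i)

/-- The tridiagonal quotient matrix of a completely regular code. -/
noncomputable def quotMatrix (ρ : ℕ) (γ α β : ℕ → ℕ) : Matrix (Fin (ρ+1)) (Fin (ρ+1)) ℝ :=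
  Matrix.of fun i j =>
    if (j : ℕ) + 1 = (i : ℕ) then (γ (i : ℕ) : ℝ)
    else if (i : ℕ) = (j : ℕ) then (α (i : ℕ) : ℝ)
    else if (i : ℕ) + 1 = (j : ℕ) then (β (i : ℕ) : ℝ)
    else 0

/-!
Distances add in a box product, `d((x, y), C × C') = d(x, C) + d(y, C')`, and a neighbour of
`(x, y)` moves in one coordinate only. So for `x ∈ C_i`, `y ∈ C'_j` the numbers of neighbours of
`(x, y)` one layer closer to, resp. farther from, `C × C'` are `γ_i + γ'_j` and `β_i + β'_j`.
The product is completely regular iff these depend only on `i + j`. Comparing the cells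
`(i + 1, j)` and `(i, j + 1)` makes `γ_{i+1} - γ_i = γ'_{j+1} - γ'_j` constant, and
`γ_0 = γ'_0 = 0` makes both linear with the same slope `n₁`; the same argument for `β_{ρ-i}` and
`β'_{ρ'-j}`, counted from the outer cells, gives `n₂`. Conversely, linear numbers add up to
`n₁ k` and `n₂ (ρ + ρ' - k)` on the `k`-th cell, and as Hamming graphs are regular the remaining
count `α` is then determined too.
-/
section DistToCode

variable {V : Type*} {G : SimpleGraph V} {C : Set V}

theorem exists_mem_dist_eq_distToCode (hC : C.Nonempty) (x : V) :
    ∃ c ∈ C, G.dist x c = distToCode G C x :=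
  Nat.sInf_mem (hC.image (G.dist x))

theorem distToCode_le_dist {c : V} (hc : c ∈ C) (x : V) : distToCode G C x ≤ G.dist x c :=
  Nat.sInf_le ⟨c, hc, rfl⟩

theorem distToCode_eq_zero_of_mem {c : V} (hc : c ∈ C) : distToCode G C c = 0 :=
  Nat.le_zero.1 <| (distToCode_le_dist hc c).trans_eq dist_self

theorem distToCode_le_add_one_of_adj (hconn : G.Connected) (hC : C.Nonempty) {x y : V}
    (hxy : G.Adj x y) : distToCode G C x ≤ distToCode G C y + 1 := by
  obtain ⟨c, hc, hyc⟩ := exists_mem_dist_eq_distToCode hC y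
  calc distToCode G C x ≤ G.dist x c := distToCode_le_dist hc x
    _ ≤ G.dist x y + G.dist y c := hconn.dist_triangle
    _ = distToCode G C y + 1 := by rw [dist_eq_one_iff_adj.2 hxy, hyc, add_comm]

theorem exists_adj_distToCode_eq (hconn : G.Connected) (hC : C.Nonempty) {x : V} {d : ℕ}
    (hx : distToCode G C x = d + 1) : ∃ y, G.Adj x y ∧ distToCode G C y = d := by
  obtain ⟨c, hc, hxc⟩ := exists_mem_dist_eq_distToCode (G := G) hC x
  obtain ⟨w, hw⟩ := hconn.exists_walk_length_eq_dist x c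
  cases w with
  | nil => simp_all
  | cons hxy w =>
    refine ⟨_, hxy, le_antisymm ?_ ?_⟩
    · calc _ ≤ G.dist _ c := distToCode_le_dist hc _
        _ ≤ w.length := dist_le w
        _ = d := by rw [Walk.length_cons] at hw; omega
    · have := distToCode_le_add_one_of_adj hconn hC hxy
      omega

theorem distToCode_le_covRad [Finite V] (x : V) : distToCode G C x ≤ covRad G C :=
  le_csSup (Set.finite_range (distToCode G C)).bddAbove ⟨x, rfl⟩

theorem exists_distToCode_eq_covRad [Finite V] [Nonempty V] :
    ∃ x, distToCode G C x = covRad G C :=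
  Nat.sSup_mem (Set.range_nonempty (distToCode G C)) (Set.finite_range _).bddAbove

theorem codeCell_nonempty_of_le_distToCode (hconn : G.Connected) (hC : C.Nonempty) {x : V}
    {i : ℕ} (hi : i ≤ distToCode G C x) : (codeCell G C i).Nonempty := by
  obtain ⟨d, hd⟩ := Nat.exists_eq_add_of_le hi
  induction d generalizing x with
  | zero => exact ⟨x, hd⟩
  | succ d ih =>
    obtain ⟨y, -, hy⟩ := exists_adj_distToCode_eq hconn hC hd
    exact ih (hy ▸ Nat.le_add_right i d) hy

theorem codeCell_nonempty [Finite V] (hconn : G.Connected) (hC : C.Nonempty) {i : ℕ}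
    (hi : i ≤ covRad G C) : (codeCell G C i).Nonempty := by
  have := hconn.nonempty
  obtain ⟨x, hx⟩ := exists_distToCode_eq_covRad (G := G) (C := C)
  exact codeCell_nonempty_of_le_distToCode hconn hC (hx ▸ hi)

end DistToCode

section LayerCounts

variable {V : Type*} {G : SimpleGraph V} {C : Set V}

/-- The paper's `γ(x)`; written with `+ 1` on the left so that it is `0` on `C`, where
`codeCell G C (0 - 1) = C` would not be. -/
noncomputable def nbrCountCloser (G : SimpleGraph V) (C : Set V) (x : V) : ℕ :=
  nbrCount G x {z | distToCode G C z + 1 = distToCode G C x}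

noncomputable def nbrCountFarther (G : SimpleGraph V) (C : Set V) (x : V) : ℕ :=
  nbrCount G x (codeCell G C (distToCode G C x + 1))

theorem nbrCountCloser_eq_zero {x : V} (hx : distToCode G C x = 0) : nbrCountCloser G C x = 0 := by
  simp [nbrCountCloser, nbrCount, hx]

theorem nbrCountCloser_eq_nbrCount_codeCell {x : V} {i : ℕ} (hx : x ∈ codeCell G C (i + 1)) :
    nbrCountCloser G C x = nbrCount G x (codeCell G C i) := by
  have hx : distToCode G C x = i + 1 := hx
  simp only [nbrCountCloser, codeCell, hx, Nat.add_right_cancel_iff]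

theorem nbrCountFarther_eq_zero [Finite V] {x : V} (hx : distToCode G C x = covRad G C) :
    nbrCountFarther G C x = 0 := by
  have hempty : codeCell G C (distToCode G C x + 1) = ∅ :=
    Set.eq_empty_of_forall_notMem fun z hz => by
      have := distToCode_le_covRad (G := G) (C := C) z
      simp only [codeCell, Set.mem_ofPred_eq] at hz
      omega
  simp [nbrCountFarther, nbrCount, hempty]

theorem nbrCount_codeCell_eq_zero (hconn : G.Connected) (hC : C.Nonempty) {x : V} {i j : ℕ}
    (hx : x ∈ codeCell G C i) (hj₁ : j + 1 ≠ i) (hj₂ : j ≠ i) (hj₃ : j ≠ i + 1) :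
    nbrCount G x (codeCell G C j) = 0 := by
  have hx : distToCode G C x = i := hx
  suffices G.neighborSet x ∩ codeCell G C j = ∅ by rw [nbrCount, this, Set.ncard_empty]
  refine Set.eq_empty_of_forall_notMem fun z ⟨hxz, hz⟩ => ?_
  have hz : distToCode G C z = j := hz
  have := distToCode_le_add_one_of_adj hconn hC hxz
  have := distToCode_le_add_one_of_adj hconn hC hxz.symm
  omega

/-- A neighbour lies at most one layer away. -/
theorem ncard_neighborSet_eq_add [Finite V] (hconn : G.Connected) (hC : C.Nonempty) (x : V) :
    (G.neighborSet x).ncard = nbrCountCloser G C x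
      + nbrCount G x (codeCell G C (distToCode G C x)) + nbrCountFarther G C x := by
  set d := distToCode G C x with hd
  set N := G.neighborSet x
  have hcover : N = N ∩ {z | distToCode G C z + 1 = d} ∪ N ∩ codeCell G C d
      ∪ N ∩ codeCell G C (d + 1) := by
    ext z
    simp only [codeCell, Set.mem_union, Set.mem_inter_iff, Set.mem_ofPred_eq]
    constructor
    · intro hz
      have := distToCode_le_add_one_of_adj hconn hC hz
      have := distToCode_le_add_one_of_adj hconn hC hz.symm
      have : distToCode G C z + 1 = d ∨ distToCode G C z = d ∨ distToCode G C z = d + 1 := by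
        omega
      tauto
    · tauto
  have hdisj₁ : Disjoint (N ∩ {z | distToCode G C z + 1 = d}) (N ∩ codeCell G C d) :=
    Set.disjoint_left.2 fun z hz hz' => by
      simp only [codeCell, Set.mem_inter_iff, Set.mem_ofPred_eq] at hz hz'
      omega
  have hdisj₂ : Disjoint (N ∩ {z | distToCode G C z + 1 = d} ∪ N ∩ codeCell G C d)
      (N ∩ codeCell G C (d + 1)) :=
    Set.disjoint_left.2 fun z hz hz' => by
      simp only [codeCell, Set.mem_union, Set.mem_inter_iff, Set.mem_ofPred_eq] at hz hz'
      omega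
  rw [nbrCountCloser, nbrCountFarther, nbrCount, nbrCount, nbrCount,
    ← Set.ncard_union_eq hdisj₁, ← Set.ncard_union_eq hdisj₂, ← hcover]

theorem IsCompRegCode.nbrCountCloser_eq (h : IsCompRegCode G C) {x y : V}
    (hxy : distToCode G C x = distToCode G C y) : nbrCountCloser G C x = nbrCountCloser G C y := by
  rcases hx : distToCode G C x with _ | i
  · rw [nbrCountCloser_eq_zero hx, nbrCountCloser_eq_zero (hxy.symm.trans hx)]
  · have hy := hxy.symm.trans hx
    rw [nbrCountCloser_eq_nbrCount_codeCell hx, nbrCountCloser_eq_nbrCount_codeCell hy]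
    exact h _ _ x hx y hy

theorem IsCompRegCode.nbrCountFarther_eq (h : IsCompRegCode G C) {x y : V}
    (hxy : distToCode G C x = distToCode G C y) :
    nbrCountFarther G C x = nbrCountFarther G C y := by
  rw [nbrCountFarther, nbrCountFarther, hxy]
  exact h _ _ x hxy y rfl

end LayerCounts

section IntersectionNumbers

variable {V : Type*} [Finite V] {G : SimpleGraph V} {C : Set V} {γ α β : ℕ → ℕ}

theorem HasIntNums.nbrCountCloser_eq (h : HasIntNums G C (covRad G C) γ α β) (x : V) :
    nbrCountCloser G C x = γ (distToCode G C x) := by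
  rcases hx : distToCode G C x with _ | i
  · rw [nbrCountCloser_eq_zero hx, h.1]
  · rw [nbrCountCloser_eq_nbrCount_codeCell hx]
    exact (h.2.2 (i + 1) (hx ▸ distToCode_le_covRad x) x hx).1 i.succ_pos

theorem HasIntNums.nbrCountFarther_eq (h : HasIntNums G C (covRad G C) γ α β) (x : V) :
    nbrCountFarther G C x = β (distToCode G C x) := by
  rcases (distToCode_le_covRad (G := G) (C := C) x).lt_or_eq with hlt | heq
  · exact (h.2.2 _ hlt.le x rfl).2.2 hlt
  · rw [nbrCountFarther_eq_zero heq, heq, h.2.1]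

theorem HasIntNums.isCompRegCode (hconn : G.Connected) (hC : C.Nonempty)
    (h : HasIntNums G C (covRad G C) γ α β) : IsCompRegCode G C := by
  intro i j x hx y hy
  suffices hcount : ∀ z ∈ codeCell G C i, nbrCount G z (codeCell G C j) =
      if j + 1 = i then γ i else if j = i then α i else if j = i + 1 then β i else 0 by
    rw [hcount x hx, hcount y hy]
  intro z (hz : distToCode G C z = i)
  split_ifs with h₁ h₂ h₃
  · subst h₁
    rw [← nbrCountCloser_eq_nbrCount_codeCell hz, h.nbrCountCloser_eq, hz]
  · subst h₂
    exact (h.2.2 j (hz ▸ distToCode_le_covRad z) z hz).2.1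
  · subst h₃
    rw [← hz]
    exact h.nbrCountFarther_eq z
  · exact nbrCount_codeCell_eq_zero hconn hC hz h₁ h₂ h₃

/-- In a regular graph `α(x)` is the degree minus `γ(x)` and `β(x)`. -/
theorem exists_hasIntNums_of_nbrCount_eq (hconn : G.Connected) (hC : C.Nonempty)
    (hreg : ∀ u v : V, (G.neighborSet u).ncard = (G.neighborSet v).ncard)
    (hγ : ∀ x, nbrCountCloser G C x = γ (distToCode G C x))
    (hβ : ∀ x, nbrCountFarther G C x = β (distToCode G C x)) :
    ∃ α, HasIntNums G C (covRad G C) γ α β := by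
  obtain ⟨c, hc⟩ := hC
  have hc₀ : distToCode G C c = 0 := distToCode_eq_zero_of_mem hc
  have := hconn.nonempty
  obtain ⟨x₀, hx₀⟩ := exists_distToCode_eq_covRad (G := G) (C := C)
  refine ⟨fun i => (G.neighborSet c).ncard - γ i - β i, ?_, ?_,
    fun i _ x (hx : distToCode G C x = i) => ⟨fun hi => ?_, ?_, fun _ => ?_⟩⟩
  · have := hγ c
    rwa [nbrCountCloser_eq_zero hc₀, hc₀, eq_comm] at this
  · rw [← hx₀, ← hβ x₀, nbrCountFarther_eq_zero hx₀]
  · rw [← nbrCountCloser_eq_nbrCount_codeCell (show x ∈ codeCell G C (i - 1 + 1) by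
      rw [Nat.sub_add_cancel hi]; exact hx), hγ, hx]
  · show nbrCount G x (codeCell G C i) = (G.neighborSet c).ncard - γ i - β i
    have := ncard_neighborSet_eq_add hconn ⟨c, hc⟩ x
    rw [hγ, hβ, hreg x c, hx] at this
    omega
  · exact hx ▸ hβ x

end IntersectionNumbers

section BoxProd

variable {V W : Type*} {G : SimpleGraph V} {H : SimpleGraph W} {C : Set V} {C' : Set W}

theorem SimpleGraph.Connected.dist_boxProd (hG : G.Connected) (hH : H.Connected) (x y : V × W) :
    (G □ H).dist x y = G.dist x.1 y.1 + H.dist x.2 y.2 := by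
  simp only [SimpleGraph.dist, edist_boxProd]
  exact ENat.toNat_add (edist_ne_top_iff_reachable.2 (hG.preconnected _ _))
    (edist_ne_top_iff_reachable.2 (hH.preconnected _ _))

theorem distToCode_boxProd (hG : G.Connected) (hH : H.Connected) (hC : C.Nonempty)
    (hC' : C'.Nonempty) (x : V) (y : W) :
    distToCode (G □ H) (C ×ˢ C') (x, y) = distToCode G C x + distToCode H C' y := by
  obtain ⟨c, hc, hxc⟩ := exists_mem_dist_eq_distToCode (G := G) hC x
  obtain ⟨c', hc', hyc'⟩ := exists_mem_dist_eq_distToCode (G := H) hC' y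
  obtain ⟨⟨d, d'⟩, ⟨hd, hd'⟩, hxyd⟩ :=
    exists_mem_dist_eq_distToCode (G := G □ H) (hC.prod hC') (x, y)
  refine le_antisymm ?_ ?_
  · calc _ ≤ (G □ H).dist (x, y) (c, c') := distToCode_le_dist (Set.mk_mem_prod hc hc') _
      _ = _ := by rw [hG.dist_boxProd hH, hxc, hyc']
  · rw [← hxyd, hG.dist_boxProd hH]
    exact add_le_add (distToCode_le_dist hd x) (distToCode_le_dist hd' y)

theorem covRad_boxProd [Finite V] [Finite W] (hG : G.Connected) (hH : H.Connected)
    (hC : C.Nonempty) (hC' : C'.Nonempty) :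
    covRad (G □ H) (C ×ˢ C') = covRad G C + covRad H C' := by
  have := hG.nonempty
  have := hH.nonempty
  refine IsGreatest.csSup_eq ⟨?_, ?_⟩
  · obtain ⟨x, hx⟩ := exists_distToCode_eq_covRad (G := G) (C := C)
    obtain ⟨y, hy⟩ := exists_distToCode_eq_covRad (G := H) (C := C')
    exact ⟨(x, y), by rw [distToCode_boxProd hG hH hC hC', hx, hy]⟩
  · rintro _ ⟨⟨x, y⟩, rfl⟩
    rw [distToCode_boxProd hG hH hC hC']
    exact add_le_add (distToCode_le_covRad x) (distToCode_le_covRad y)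

theorem nbrCount_boxProd [Finite V] [Finite W] (x : V) (y : W) (S : Set (V × W)) :
    nbrCount (G □ H) (x, y) S
      = nbrCount G x {z | (z, y) ∈ S} + nbrCount H y {z | (x, z) ∈ S} := by
  have hsplit : (G □ H).neighborSet (x, y) ∩ S = (G.neighborSet x ∩ {z | (z, y) ∈ S}) ×ˢ {y}
      ∪ {x} ×ˢ (H.neighborSet y ∩ {z | (x, z) ∈ S}) := by
    ext ⟨a, b⟩
    simp only [neighborSet_boxProd, Set.mem_inter_iff, Set.mem_union, Set.mem_prod,
      Set.mem_singleton_iff, Set.mem_ofPred_eq]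
    constructor
    · rintro ⟨⟨ha, rfl⟩ | ⟨rfl, hb⟩, hS⟩ <;> tauto
    · rintro (⟨⟨ha, hS⟩, rfl⟩ | ⟨rfl, hb, hS⟩) <;> tauto
  have hdisj : Disjoint ((G.neighborSet x ∩ {z | (z, y) ∈ S}) ×ˢ {y})
      ({x} ×ˢ (H.neighborSet y ∩ {z | (x, z) ∈ S})) :=
    Set.disjoint_left.2 fun p hp hp' => G.loopless.irrefl p.1 <| by
      rw [Set.mem_prod, Set.mem_singleton_iff] at hp'
      exact hp'.1 ▸ hp.1.1
  rw [nbrCount, hsplit, Set.ncard_union_eq hdisj, Set.ncard_prod, Set.ncard_prod,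
    Set.ncard_singleton, Set.ncard_singleton, mul_one, one_mul]
  rfl

theorem ncard_neighborSet_boxProd [Finite V] [Finite W] (x : V) (y : W) :
    ((G □ H).neighborSet (x, y)).ncard = (G.neighborSet x).ncard + (H.neighborSet y).ncard := by
  simpa [nbrCount] using nbrCount_boxProd (G := G) (H := H) x y Set.univ

theorem nbrCountCloser_boxProd [Finite V] [Finite W] (hG : G.Connected) (hH : H.Connected)
    (hC : C.Nonempty) (hC' : C'.Nonempty) (x : V) (y : W) :
    nbrCountCloser (G □ H) (C ×ˢ C') (x, y) = nbrCountCloser G C x + nbrCountCloser H C' y := by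
  simp only [nbrCountCloser, nbrCount_boxProd, Set.mem_ofPred_eq,
    distToCode_boxProd hG hH hC hC']
  congr 2 <;> ext z <;> simp only [Set.mem_ofPred_eq] <;> omega

theorem nbrCountFarther_boxProd [Finite V] [Finite W] (hG : G.Connected) (hH : H.Connected)
    (hC : C.Nonempty) (hC' : C'.Nonempty) (x : V) (y : W) :
    nbrCountFarther (G □ H) (C ×ˢ C') (x, y) = nbrCountFarther G C x + nbrCountFarther H C' y := by
  simp only [nbrCountFarther, codeCell, nbrCount_boxProd, Set.mem_ofPred_eq,
    distToCode_boxProd hG hH hC hC']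
  congr 2 <;> ext z <;> simp only [Set.mem_ofPred_eq] <;> omega

end BoxProd

section Hamming

variable {n : ℕ} {Q : Type*} [DecidableEq Q]

theorem hammingGraph_connected [Nonempty (Fin n → Q)] : (hammingGraph n Q).Connected := by
  refine (connected_iff _).2 ⟨fun x y => ?_, inferInstance⟩
  let z : ℕ → Fin n → Q := fun k i => if (i : ℕ) < k then y i else x i
  have hstep : ∀ k, (hammingGraph n Q).Reachable (z k) (z (k + 1)) := fun k => by
    -- `z k` and `z (k + 1)` can only differ in coordinate `k`.
    have hle : hammingDist (z k) (z (k + 1)) ≤ 1 := Finset.card_le_one.2 fun i hi j hj => by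
      simp only [z, Finset.mem_filter, Finset.mem_univ, true_and] at hi hj
      split_ifs at hi hj <;> first | exact absurd rfl ‹_› | exact Fin.ext (by omega)
    rcases Nat.le_one_iff_eq_zero_or_eq_one.1 hle with h | h
    · rw [hammingDist_eq_zero.1 h]
    · exact Adj.reachable h
  have hreach : ∀ k, (hammingGraph n Q).Reachable (z 0) (z k) := fun k =>
    Nat.rec .rfl (fun k ih => ih.trans (hstep k)) k
  simpa [z] using hreach n

theorem hammingGraph_neighborSet_add [AddGroup Q] (c x : Fin n → Q) :
    (hammingGraph n Q).neighborSet (c + x) = (c + ·) '' (hammingGraph n Q).neighborSet x := by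
  ext w
  rw [Set.image_add_left, Set.mem_preimage, mem_neighborSet, mem_neighborSet]
  show hammingDist _ _ = 1 ↔ hammingDist _ _ = 1
  rw [hammingDist_eq_hammingNorm, hammingDist_eq_hammingNorm, neg_add_rev, add_assoc]

theorem hammingGraph_ncard_neighborSet_eq [AddGroup Q] (x y : Fin n → Q) :
    ((hammingGraph n Q).neighborSet x).ncard = ((hammingGraph n Q).neighborSet y).ncard := by
  rw [← sub_add_cancel y x, hammingGraph_neighborSet_add,
    Set.ncard_image_of_injective _ (add_right_injective _)]

theorem hammingGraph_fin_ncard_neighborSet_eq {q : ℕ} (x y : Fin n → Fin q) :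
    ((hammingGraph n (Fin q)).neighborSet x).ncard
      = ((hammingGraph n (Fin q)).neighborSet y).ncard := by
  cases q with
  | zero => rw [Subsingleton.elim x y]
  | succ q => exact hammingGraph_ncard_neighborSet_eq x y

end Hamming

theorem exists_eq_mul_of_add_succ_eq {f g : ℕ → ℕ} {m m' : ℕ} (hm : 1 ≤ m) (hm' : 1 ≤ m')
    (hf : f 0 = 0) (hg : g 0 = 0)
    (h : ∀ i < m, ∀ j < m', f (i + 1) + g j = f i + g (j + 1)) :
    ∃ c, (∀ i ≤ m, f i = c * i) ∧ ∀ j ≤ m', g j = c * j := by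
  have hg₁ : g 1 = f 1 := by
    have : f 1 + g 0 = f 0 + g 1 := h 0 hm 0 hm'
    omega
  refine ⟨f 1, fun i hi => ?_, fun j hj => ?_⟩
  · induction i with
    | zero => rw [hf, mul_zero]
    | succ i ih =>
      have : f (i + 1) + g 0 = f i + g 1 := h i hi 0 hm'
      rw [mul_add_one, ← ih (by omega)]
      omega
  · induction j with
    | zero => rw [hg, mul_zero]
    | succ j ih =>
      have : f 1 + g j = f 0 + g (j + 1) := h 0 hm j hj
      rw [mul_add_one, ← ih (by omega)]
      omega

section BoxProdIntNums

variable {V W : Type*} [Finite V] [Finite W] {G : SimpleGraph V} {H : SimpleGraph W}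
  {C : Set V} {C' : Set W} {γ α β γ' α' β' : ℕ → ℕ}

theorem IsCompRegCode.boxProd_add_eq (hcr : IsCompRegCode (G □ H) (C ×ˢ C'))
    (hG : G.Connected) (hH : H.Connected) (hC : C.Nonempty) (hC' : C'.Nonempty)
    (hIN : HasIntNums G C (covRad G C) γ α β) (hIN' : HasIntNums H C' (covRad H C') γ' α' β')
    {i j i' j' : ℕ} (hi : i ≤ covRad G C) (hj : j ≤ covRad H C') (hi' : i' ≤ covRad G C)
    (hj' : j' ≤ covRad H C') (hs : i + j = i' + j') :
    γ i + γ' j = γ i' + γ' j' ∧ β i + β' j = β i' + β' j' := by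
  obtain ⟨x, rfl⟩ := codeCell_nonempty hG hC hi
  obtain ⟨y, rfl⟩ := codeCell_nonempty hH hC' hj
  obtain ⟨x', rfl⟩ := codeCell_nonempty hG hC hi'
  obtain ⟨y', rfl⟩ := codeCell_nonempty hH hC' hj'
  have hd : distToCode (G □ H) (C ×ˢ C') (x, y) = distToCode (G □ H) (C ×ˢ C') (x', y') := by
    rw [distToCode_boxProd hG hH hC hC', distToCode_boxProd hG hH hC hC', hs]
  have hγ := hcr.nbrCountCloser_eq hd
  have hβ := hcr.nbrCountFarther_eq hd
  simp only [nbrCountCloser_boxProd hG hH hC hC', nbrCountFarther_boxProd hG hH hC hC',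
    hIN.nbrCountCloser_eq, hIN'.nbrCountCloser_eq, hIN.nbrCountFarther_eq,
    hIN'.nbrCountFarther_eq] at hγ hβ
  exact ⟨hγ, hβ⟩

theorem IsCompRegCode.exists_linear_of_boxProd (hcr : IsCompRegCode (G □ H) (C ×ˢ C'))
    (hG : G.Connected) (hH : H.Connected) (hC : C.Nonempty) (hC' : C'.Nonempty)
    (hIN : HasIntNums G C (covRad G C) γ α β) (hIN' : HasIntNums H C' (covRad H C') γ' α' β')
    (hρ : 1 ≤ covRad G C) (hρ' : 1 ≤ covRad H C') :
    ∃ n₁ n₂ : ℕ, (∀ i ≤ covRad G C, γ i = n₁ * i) ∧ (∀ i ≤ covRad H C', γ' i = n₁ * i) ∧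
      (∀ i ≤ covRad G C, β (covRad G C - i) = n₂ * i) ∧
      (∀ i ≤ covRad H C', β' (covRad H C' - i) = n₂ * i) := by
  obtain ⟨n₁, hγ, hγ'⟩ := exists_eq_mul_of_add_succ_eq hρ hρ' hIN.1 hIN'.1 fun i hi j hj =>
    (hcr.boxProd_add_eq hG hH hC hC' hIN hIN' hi hj.le hi.le hj (by omega)).1
  obtain ⟨n₂, hβ, hβ'⟩ := exists_eq_mul_of_add_succ_eq (f := fun i => β (covRad G C - i))
    (g := fun j => β' (covRad H C' - j)) hρ hρ' (by simpa using hIN.2.1) (by simpa using hIN'.2.1)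
    fun i hi j hj => (hcr.boxProd_add_eq hG hH hC hC' hIN hIN' (Nat.sub_le _ _) (Nat.sub_le _ _)
      (Nat.sub_le _ _) (Nat.sub_le _ _) (by omega)).2
  exact ⟨n₁, n₂, hγ, hγ', hβ, hβ'⟩

theorem exists_hasIntNums_boxProd (hG : G.Connected) (hH : H.Connected)
    (hGreg : ∀ u v : V, (G.neighborSet u).ncard = (G.neighborSet v).ncard)
    (hHreg : ∀ u v : W, (H.neighborSet u).ncard = (H.neighborSet v).ncard)
    (hC : C.Nonempty) (hC' : C'.Nonempty)
    (hIN : HasIntNums G C (covRad G C) γ α β) (hIN' : HasIntNums H C' (covRad H C') γ' α' β')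
    {n₁ n₂ : ℕ} (hγ : ∀ i ≤ covRad G C, γ i = n₁ * i) (hγ' : ∀ i ≤ covRad H C', γ' i = n₁ * i)
    (hβ : ∀ i ≤ covRad G C, β (covRad G C - i) = n₂ * i)
    (hβ' : ∀ i ≤ covRad H C', β' (covRad H C' - i) = n₂ * i) :
    ∃ ᾱ, HasIntNums (G □ H) (C ×ˢ C') (covRad G C + covRad H C') (fun i => n₁ * i) ᾱ
      (fun i => n₂ * (covRad G C + covRad H C' - i)) := by
  have rev {f : ℕ → ℕ} {m : ℕ} (hf : ∀ i ≤ m, f (m - i) = n₂ * i) {i : ℕ} (hi : i ≤ m) :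
      f i = n₂ * (m - i) := by
    simpa [Nat.sub_sub_self hi] using hf (m - i) (Nat.sub_le m i)
  rw [← covRad_boxProd hG hH hC hC']
  refine exists_hasIntNums_of_nbrCount_eq (hG.boxProd hH) (hC.prod hC')
    (fun ⟨u, u'⟩ ⟨v, v'⟩ => ?_) (fun ⟨x, y⟩ => ?_) (fun ⟨x, y⟩ => ?_)
  · rw [ncard_neighborSet_boxProd, ncard_neighborSet_boxProd, hGreg u v, hHreg u' v']
  · have hx := distToCode_le_covRad (G := G) (C := C) x
    have hy := distToCode_le_covRad (G := H) (C := C') y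
    rw [nbrCountCloser_boxProd hG hH hC hC', hIN.nbrCountCloser_eq, hIN'.nbrCountCloser_eq,
      hγ _ hx, hγ' _ hy, distToCode_boxProd hG hH hC hC', mul_add]
  · have hx := distToCode_le_covRad (G := G) (C := C) x
    have hy := distToCode_le_covRad (G := H) (C := C') y
    rw [nbrCountFarther_boxProd hG hH hC hC', hIN.nbrCountFarther_eq, hIN'.nbrCountFarther_eq,
      rev hβ hx, rev hβ' hy, distToCode_boxProd hG hH hC hC', covRad_boxProd hG hH hC hC',
      ← mul_add]
    congr 1
    omega

end BoxProdIntNums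

theorem product_compRegular_iff_general {n q n' q' : ℕ}
    (C : Set (Fin n → Fin q)) (C' : Set (Fin n' → Fin q'))
    (hCnt : C.Nontrivial ∧ C ≠ Set.univ)
    (hC'nt : C'.Nontrivial ∧ C' ≠ Set.univ)
    (ρ ρ' : ℕ) (hρ1 : 1 ≤ ρ) (hρρ' : ρ ≤ ρ')
    (γ α β γ' α' β' : ℕ → ℕ)
    (hρ : covRad (hammingGraph n (Fin q)) C = ρ)
    (hρ' : covRad (hammingGraph n' (Fin q')) C' = ρ')
    (hIN : HasIntNums (hammingGraph n (Fin q)) C ρ γ α β)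
    (hIN' : HasIntNums (hammingGraph n' (Fin q')) C' ρ' γ' α' β') :
    (IsCompRegCode (hammingGraph n (Fin q) □ hammingGraph n' (Fin q')) (C ×ˢ C') ↔
      ∃ n1 n2 : ℕ, (∀ i ≤ ρ, γ i = n1 * i) ∧ (∀ i ≤ ρ', γ' i = n1 * i) ∧ (∀ i ≤ ρ, β (ρ - i) = n2 * i) ∧ (∀ i ≤ ρ', β' (ρ' - i) = n2 * i)) ∧
    (∀ n1 n2 : ℕ, (∀ i ≤ ρ, γ i = n1 * i) ∧ (∀ i ≤ ρ', γ' i = n1 * i) ∧ (∀ i ≤ ρ, β (ρ - i) = n2 * i) ∧ (∀ i ≤ ρ', β' (ρ' - i) = n2 * i) →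
      covRad (hammingGraph n (Fin q) □ hammingGraph n' (Fin q')) (C ×ˢ C') = ρ + ρ' ∧
      ∃ ᾱ : ℕ → ℕ, HasIntNums (hammingGraph n (Fin q) □ hammingGraph n' (Fin q')) (C ×ˢ C') (ρ + ρ')
        (fun i => n1 * i) ᾱ (fun i => n2 * (ρ + ρ' - i))) := by
  have hCne := hCnt.1.nonempty
  have hC'ne := hC'nt.1.nonempty
  have : Nonempty (Fin n → Fin q) := ⟨hCne.some⟩
  have : Nonempty (Fin n' → Fin q') := ⟨hC'ne.some⟩
  have hG := hammingGraph_connected (n := n) (Q := Fin q)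
  have hH := hammingGraph_connected (n := n') (Q := Fin q')
  subst hρ hρ'
  have hcov := covRad_boxProd hG hH hCne hC'ne
  have hprod (n₁ n₂ : ℕ) := exists_hasIntNums_boxProd (n₁ := n₁) (n₂ := n₂) hG hH
    hammingGraph_fin_ncard_neighborSet_eq hammingGraph_fin_ncard_neighborSet_eq hCne hC'ne hIN hIN'
  refine ⟨⟨fun hcr => hcr.exists_linear_of_boxProd hG hH hCne hC'ne hIN hIN' hρ1 (hρ1.trans hρρ'),
    fun ⟨n₁, n₂, hγ, hγ', hβ, hβ'⟩ => ?_⟩,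
    fun n₁ n₂ ⟨hγ, hγ', hβ, hβ'⟩ => ⟨hcov, hprod n₁ n₂ hγ hγ' hβ hβ'⟩⟩
  obtain ⟨ᾱ, h⟩ := hprod n₁ n₂ hγ hγ' hβ hβ'
  exact (hcov ▸ h).isCompRegCode (hG.boxProd hH) (hCne.prod hC'ne)

/-- characterization of when the product of two completely regular codes
is completely regular, with the resulting covering radius and intersection numbers. -/
theorem product_compRegular_iff {n q n' q' : ℕ}
    (C : Set (Fin n → Fin q)) (C' : Set (Fin n' → Fin q'))
    (hCnt : C.Nontrivial ∧ C ≠ Set.univ)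
    (hC'nt : C'.Nontrivial ∧ C' ≠ Set.univ)
    (ρ ρ' : ℕ) (hρ1 : 1 ≤ ρ) (hρρ' : ρ ≤ ρ')
    (γ α β γ' α' β' : ℕ → ℕ)
    (hC : IsCompRegCode (hammingGraph n (Fin q)) C)
    (hC' : IsCompRegCode (hammingGraph n' (Fin q')) C')
    (hρ : covRad (hammingGraph n (Fin q)) C = ρ)
    (hρ' : covRad (hammingGraph n' (Fin q')) C' = ρ')
    (hIN : HasIntNums (hammingGraph n (Fin q)) C ρ γ α β)
    (hIN' : HasIntNums (hammingGraph n' (Fin q')) C' ρ' γ' α' β') :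
    (IsCompRegCode (hammingGraph n (Fin q) □ hammingGraph n' (Fin q')) (C ×ˢ C') ↔
      ∃ n1 n2 : ℕ, (∀ i ≤ ρ, γ i = n1 * i) ∧ (∀ i ≤ ρ', γ' i = n1 * i) ∧ (∀ i ≤ ρ, β (ρ - i) = n2 * i) ∧ (∀ i ≤ ρ', β' (ρ' - i) = n2 * i)) ∧
    (∀ n1 n2 : ℕ, (∀ i ≤ ρ, γ i = n1 * i) ∧ (∀ i ≤ ρ', γ' i = n1 * i) ∧ (∀ i ≤ ρ, β (ρ - i) = n2 * i) ∧ (∀ i ≤ ρ', β' (ρ' - i) = n2 * i) →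
      covRad (hammingGraph n (Fin q) □ hammingGraph n' (Fin q')) (C ×ˢ C') = ρ + ρ' ∧
      ∃ ᾱ : ℕ → ℕ, HasIntNums (hammingGraph n (Fin q) □ hammingGraph n' (Fin q')) (C ×ˢ C') (ρ + ρ')
        (fun i => n1 * i) ᾱ (fun i => n2 * (ρ + ρ' - i))) :=
  product_compRegular_iff_general C C' hCnt hC'nt ρ ρ' hρ1 hρρ' γ α β γ' α' β' hρ hρ' hIN hIN'
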